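/- For every finite simple graph G on n vertices, φ(G) ≥ W(G), where φ(G) is the smallest r such that G is a generalized r-partite graph, and W(G) = Σ_{v ∈ V(G)} 1/(n - d(v)). -/

import Mathlib

open Finset

/-- A δ-set in `G`: every vertex of `S` has degree at most `n - |S|`. -/
def IsDeltaSet {V : Type*} [Fintype V] (G : SimpleGraph V) [DecidableRel G.Adj]
    (S : Finset V) : Prop :=
  ∀ v ∈ S, G.degree v ≤ Fintype.card V - S.card

/-- A partition of the vertex set into `r` pairwise disjoint δ-sets. -/
def IsGenPartition {V : Type*} [Fintype V] (G : SimpleGraph V) [DecidableRel G.Adj]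
    (r : ℕ) (P : Fin r → Finset V) : Prop :=
  (∀ i, IsDeltaSet G (P i)) ∧ (∀ i j, i ≠ j → Disjoint (P i) (P j)) ∧
    (∀ v : V, ∃ i, v ∈ P i)

/-- `φ(G)`: the least `r` such that `G` is a generalized `r`-partite graph. -/
noncomputable def genPartNum {V : Type*} [Fintype V] (G : SimpleGraph V)
    [DecidableRel G.Adj] : ℕ :=
  sInf {r | ∃ P : Fin r → Finset V, IsGenPartition G r P}

/-!
Each vertex `v` of a δ-set `S` satisfies `|S| ≤ n - d(v)`, so the weights `1 / (n - d(v))` of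
the vertices of `S` add up to at most `|S| · (1 / |S|) = 1`. Summing over the parts of an optimal
partition into `φ(G)` δ-sets gives `W(G) ≤ φ(G)`.
-/

section

variable {V : Type*} [Fintype V] (G : SimpleGraph V) [DecidableRel G.Adj]

theorem isDeltaSet_singleton (v : V) : IsDeltaSet G {v} := by
  intro w hw
  rw [mem_singleton.mp hw, card_singleton]
  have := G.degree_lt_card_verts v
  omega

theorem exists_isGenPartition : ∃ r, ∃ P : Fin r → Finset V, IsGenPartition G r P := by
  let e := (Fintype.equivFin V).symm
  refine ⟨Fintype.card V, fun i => {e i}, fun i => isDeltaSet_singleton G _, ?_, ?_⟩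
  · intro i j hij
    simpa only [disjoint_singleton] using e.injective.ne hij
  · exact fun v => ⟨e.symm v, by simp⟩

variable {G}

theorem IsDeltaSet.sum_inv_le_one {S : Finset V} (hS : IsDeltaSet G S) :
    ∑ v ∈ S, (1 : ℝ) / ((Fintype.card V : ℝ) - G.degree v) ≤ 1 := by
  rcases S.eq_empty_or_nonempty with rfl | hne
  · simp
  have hcard_pos : (0 : ℝ) < S.card := by exact_mod_cast hne.card_pos
  have hcard_le (v) (hv : v ∈ S) : (S.card : ℝ) ≤ (Fintype.card V : ℝ) - G.degree v := by
    have : G.degree v + S.card ≤ Fintype.card V := by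
      have := hS v hv
      have := S.card_le_univ
      omega
    rw [le_sub_iff_add_le']
    exact_mod_cast this
  calc ∑ v ∈ S, (1 : ℝ) / ((Fintype.card V : ℝ) - G.degree v)
      ≤ ∑ _v ∈ S, (1 : ℝ) / S.card :=
        sum_le_sum fun v hv => one_div_le_one_div_of_le hcard_pos (hcard_le v hv)
    _ = 1 := by
        rw [sum_const, nsmul_eq_mul, mul_one_div_cancel hcard_pos.ne']

theorem IsGenPartition.sum_inv_le {r : ℕ} {P : Fin r → Finset V} (hP : IsGenPartition G r P) :
    ∑ v : V, (1 : ℝ) / ((Fintype.card V : ℝ) - G.degree v) ≤ r := by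
  classical
  obtain ⟨hδ, hdisj, hcover⟩ := hP
  have huniv : (univ : Finset V) = univ.biUnion P := by
    ext v
    simpa using hcover v
  calc ∑ v : V, (1 : ℝ) / ((Fintype.card V : ℝ) - G.degree v)
      = ∑ i, ∑ v ∈ P i, (1 : ℝ) / ((Fintype.card V : ℝ) - G.degree v) := by
        rw [huniv, sum_biUnion fun i _ j _ hij => hdisj i j hij]
    _ ≤ ∑ _i : Fin r, (1 : ℝ) := sum_le_sum fun i _ => (hδ i).sum_inv_le_one
    _ = r := by simp

end

/-- `φ(G) ≥ W(G)`. -/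
theorem genPartNum_ge_weight {V : Type*} [Fintype V] (G : SimpleGraph V)
    [DecidableRel G.Adj] :
    (∑ v : V, (1 : ℝ) / ((Fintype.card V : ℝ) - G.degree v)) ≤ genPartNum G := by
  obtain ⟨P, hP⟩ := Nat.sInf_mem (exists_isGenPartition G)
  exact IsGenPartition.sum_inv_le hP
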